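/- arXiv:2407.14017 — 5 statements merged into one kernel-verified Lean document; each statement's English description precedes it below -/
import Mathlib

section
/- (Bubble Characterization Lemma, discrete time) Suppose q_t > 0, P_t > 0, D_t ≥ 0 satisfy q_t P_t = q_{t+1}(P_{t+1} + D_{t+1}) for all t, with q_0 = 1. Then lim_{T→∞} q_T P_T > 0 (i.e., a rational bubble exists) if and only if Σ_{t=1}^∞ D_t / P_t < ∞. -/
/-!
With `x t = q t * P t` and `r t = D (t + 1) / P (t + 1)`, no-arbitrage reads
`x t = x (t + 1) * (1 + r t)`, so `x T = x 0 / ∏ t < T, (1 + r t)` decreases. It has a positive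
limit iff it is bounded away from `0`, i.e. iff the partial products are bounded; and since
`1 + ∑ r ≤ ∏ (1 + r) ≤ exp (∑ r)`, this happens iff `∑ r t < ∞`.
-/

open Filter Topology Finset

theorem Finset.one_add_sum_le_prod_one_add {ι R : Type*} [CommSemiring R] [PartialOrder R]
    [IsOrderedRing R] (s : Finset ι) {f : ι → R} (hf : ∀ i ∈ s, 0 ≤ f i) :
    1 + ∑ i ∈ s, f i ≤ ∏ i ∈ s, (1 + f i) := by
  classical
  induction s using Finset.induction_on with
  | empty => simp
  | insert a s ha ih =>
    rw [sum_insert ha, prod_insert ha]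
    have hfa : 0 ≤ f a := hf a (mem_insert_self a s)
    have hs : ∀ i ∈ s, 0 ≤ f i := fun i hi => hf i (mem_insert_of_mem hi)
    calc 1 + (f a + ∑ i ∈ s, f i)
        ≤ 1 + (f a + ∑ i ∈ s, f i) + f a * ∑ i ∈ s, f i :=
          le_add_of_nonneg_right (mul_nonneg hfa (sum_nonneg hs))
      _ = (1 + f a) * (1 + ∑ i ∈ s, f i) := by ring
      _ ≤ (1 + f a) * ∏ i ∈ s, (1 + f i) :=
          mul_le_mul_of_nonneg_left (ih hs) (add_nonneg zero_le_one hfa)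

theorem apply_zero_eq_mul_prod_range {M : Type*} [CommMonoid M] {x c : ℕ → M}
    (h : ∀ t, x t = x (t + 1) * c t) (n : ℕ) : x 0 = x n * ∏ t ∈ range n, c t := by
  induction n with
  | zero => simp
  | succ n ih => rw [ih, prod_range_succ, h n, mul_assoc, mul_comm (c n)]

theorem Antitone.exists_pos_tendsto_iff {x : ℕ → ℝ} (hx : Antitone x) :
    (∃ b, 0 < b ∧ Tendsto x atTop (𝓝 b)) ↔ ∃ c, 0 < c ∧ ∀ n, c ≤ x n := by
  constructor
  · rintro ⟨b, hb, hlim⟩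
    exact ⟨b, hb, hx.le_of_tendsto hlim⟩
  · rintro ⟨c, hc, hcx⟩
    have hbdd : BddBelow (Set.range x) := ⟨c, Set.forall_mem_range.2 hcx⟩
    exact ⟨⨅ n, x n, hc.trans_le (le_ciInf hcx), tendsto_atTop_ciInf hx hbdd⟩

theorem Real.summable_iff_exists_prod_range_one_add_le {r : ℕ → ℝ} (hr : ∀ t, 0 ≤ r t) :
    Summable r ↔ ∃ C, ∀ n, ∏ t ∈ range n, (1 + r t) ≤ C := by
  constructor
  · intro hsum
    refine ⟨Real.exp (∑' t, r t), fun n => ?_⟩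
    calc ∏ t ∈ range n, (1 + r t) ≤ Real.exp (∑ t ∈ range n, r t) :=
          Real.prod_one_add_le_exp_sum _ hr
      _ ≤ Real.exp (∑' t, r t) :=
          Real.exp_le_exp.2 (hsum.sum_le_tsum _ fun t _ => hr t)
  · rintro ⟨C, hC⟩
    refine summable_of_sum_range_le hr (c := C) fun n => ?_
    calc ∑ t ∈ range n, r t ≤ 1 + ∑ t ∈ range n, r t := le_add_of_nonneg_left zero_le_one
      _ ≤ ∏ t ∈ range n, (1 + r t) := one_add_sum_le_prod_one_add _ fun t _ => hr t
      _ ≤ C := hC n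

theorem exists_pos_tendsto_iff_summable_of_eq_succ_mul_one_add {x r : ℕ → ℝ}
    (hx : ∀ t, 0 < x t) (hr : ∀ t, 0 ≤ r t) (h : ∀ t, x t = x (t + 1) * (1 + r t)) :
    (∃ b, 0 < b ∧ Tendsto x atTop (𝓝 b)) ↔ Summable r := by
  have hanti : Antitone x := antitone_nat_of_succ_le fun t => by
    rw [h t]
    exact le_mul_of_one_le_right (hx _).le (le_add_of_nonneg_right (hr t))
  have hprod_pos : ∀ n, 0 < ∏ t ∈ range n, (1 + r t) := fun n =>
    prod_pos fun t _ => add_pos_of_pos_of_nonneg one_pos (hr t)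
  have hx_eq : ∀ n, x n = x 0 / ∏ t ∈ range n, (1 + r t) := fun n => by
    rw [apply_zero_eq_mul_prod_range h n, mul_div_cancel_right₀ _ (hprod_pos n).ne']
  rw [hanti.exists_pos_tendsto_iff, Real.summable_iff_exists_prod_range_one_add_le hr]
  constructor
  · rintro ⟨c, hc, hcx⟩
    refine ⟨x 0 / c, fun n => ?_⟩
    have hcn := hcx n
    rw [hx_eq n, le_div_iff₀ (hprod_pos n)] at hcn
    rwa [le_div_iff₀ hc, mul_comm]
  · rintro ⟨C, hC⟩
    have hC_pos : 0 < C := (hprod_pos 0).trans_le (hC 0)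
    refine ⟨x 0 / C, div_pos (hx 0) hC_pos, fun n => ?_⟩
    rw [hx_eq n]
    exact div_le_div_of_nonneg_left (hx 0).le (hprod_pos n) (hC n)

theorem stmt_4_general (q P D : ℕ → ℝ)
    (hq : ∀ t, 0 < q t) (hP : ∀ t, 0 < P t) (hD : ∀ t, 0 ≤ D t)
    (hna : ∀ t, q t * P t = q (t + 1) * (P (t + 1) + D (t + 1))) :
    (∃ b : ℝ, 0 < b ∧
      Filter.Tendsto (fun T => q T * P T) Filter.atTop (nhds b)) ↔
    Summable (fun t : ℕ => D (t + 1) / P (t + 1)) := by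
  refine exists_pos_tendsto_iff_summable_of_eq_succ_mul_one_add
    (fun t => mul_pos (hq t) (hP t)) (fun t => div_nonneg (hD _) (hP _).le) fun t => ?_
  rw [hna t, mul_assoc, mul_one_add, mul_div_cancel₀ _ (hP _).ne']

/-- Bubble Characterization Lemma (discrete time): lim q_T P_T > 0 iff
Σ D_t / P_t < ∞. -/
theorem stmt_4 (q P D : ℕ → ℝ)
    (hq : ∀ t, 0 < q t) (hq0 : q 0 = 1) (hP : ∀ t, 0 < P t) (hD : ∀ t, 0 ≤ D t)
    (hna : ∀ t, q t * P t = q (t + 1) * (P (t + 1) + D (t + 1))) :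
    (∃ b : ℝ, 0 < b ∧
      Filter.Tendsto (fun T => q T * P T) Filter.atTop (nhds b)) ↔
    Summable (fun t : ℕ => D (t + 1) / P (t + 1)) :=
  stmt_4_general q P D hq hP hD hna
end

section
/- If the dividend yield D_t/P_t converges to a positive constant c > 0, then Σ_{t=1}^∞ D_t/P_t = ∞; consequently, under the no-arbitrage equation q_t P_t = q_{t+1}(P_{t+1}+D_{t+1}) with P_t > 0, q_t > 0, the transversality condition lim_{T→∞} q_T P_T = 0 holds (no rational bubble). -/
/-!
Writing `yₜ = Dₜ / Pₜ`, the no-arbitrage equation says `qₜ Pₜ = q₍ₜ₊₁₎ P₍ₜ₊₁₎ (1 + y₍ₜ₊₁₎)`, so the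
discounted price `qₜ Pₜ` has successive ratios `1 / (1 + y₍ₜ₊₁₎) → 1 / (1 + c) < 1`. By the ratio
test it is summable, hence tends to `0`. The yields themselves tend to `c ≠ 0`, so they are not
summable.
-/

open Filter Topology

lemma not_summable_of_tendsto_ne_zero {f : ℕ → ℝ} {c : ℝ} (hc : c ≠ 0)
    (hf : Tendsto f atTop (𝓝 c)) : ¬ Summable f :=
  fun hs => hc (tendsto_nhds_unique hf hs.tendsto_atTop_zero)

lemma tendsto_zero_of_eq_mul_one_add {a y : ℕ → ℝ} {c : ℝ} (hc : 0 < c) (ha : ∀ t, 0 < a t)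
    (hrec : ∀ t, a t = a (t + 1) * (1 + y (t + 1))) (hy : Tendsto y atTop (𝓝 c)) :
    Tendsto a atTop (𝓝 0) := by
  have hratio : ∀ t, ‖a (t + 1)‖ / ‖a t‖ = (1 + y (t + 1))⁻¹ := by
    intro t
    rw [Real.norm_of_nonneg (ha _).le, Real.norm_of_nonneg (ha _).le, hrec t,
      div_mul_cancel_left₀ (ha _).ne']
  have hlim : Tendsto (fun t => (1 + y (t + 1))⁻¹) atTop (𝓝 (1 + c)⁻¹) :=
    ((tendsto_const_nhds.add hy).comp (tendsto_add_atTop_nat 1)).inv₀ (by positivity)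
  have hlt : (1 + c)⁻¹ < 1 := inv_lt_one_of_one_lt₀ (by linarith)
  refine (summable_of_ratio_test_tendsto_lt_one hlt
    (Eventually.of_forall fun t => (ha t).ne') ?_).tendsto_atTop_zero
  simpa only [hratio] using hlim

lemma mul_eq_mul_one_add_div_of_noArbitrage {q P D : ℕ → ℝ} (hP : ∀ t, 0 < P t)
    (hna : ∀ t, q t * P t = q (t + 1) * (P (t + 1) + D (t + 1))) (t : ℕ) :
    q t * P t = q (t + 1) * P (t + 1) * (1 + D (t + 1) / P (t + 1)) := by
  have := (hP (t + 1)).ne'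
  rw [hna t]
  field_simp

theorem stmt_6_general (q P D : ℕ → ℝ) (c : ℝ) (hc : 0 < c)
    (hq : ∀ t, 0 < q t) (hP : ∀ t, 0 < P t)
    (hna : ∀ t, q t * P t = q (t + 1) * (P (t + 1) + D (t + 1)))
    (hyield : Filter.Tendsto (fun t => D t / P t) Filter.atTop (nhds c)) :
    ¬ Summable (fun t : ℕ => D (t + 1) / P (t + 1)) ∧
    Filter.Tendsto (fun T => q T * P T) Filter.atTop (nhds 0) :=
  ⟨not_summable_of_tendsto_ne_zero hc.ne' (hyield.comp (tendsto_add_atTop_nat 1)),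
    tendsto_zero_of_eq_mul_one_add hc (fun t => mul_pos (hq t) (hP t))
      (mul_eq_mul_one_add_div_of_noArbitrage hP hna) hyield⟩

/-- If the dividend yield converges to c > 0 then Σ D_t/P_t = ∞ and the
transversality condition holds (no rational bubble). -/
theorem stmt_6 (q P D : ℕ → ℝ) (c : ℝ) (hc : 0 < c)
    (hq : ∀ t, 0 < q t) (hq0 : q 0 = 1) (hP : ∀ t, 0 < P t) (hD : ∀ t, 0 ≤ D t)
    (hna : ∀ t, q t * P t = q (t + 1) * (P (t + 1) + D (t + 1)))
    (hyield : Filter.Tendsto (fun t => D t / P t) Filter.atTop (nhds c)) :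
    ¬ Summable (fun t : ℕ => D (t + 1) / P (t + 1)) ∧
    Filter.Tendsto (fun T => q T * P T) Filter.atTop (nhds 0) :=
  stmt_6_general q P D c hc hq hP hna hyield
end

section
/- (Continuous-time Bubble Characterization) Let q, P: [0,∞) → (0,∞) be continuously differentiable with q(0) = 1, and let f: [0,∞) → [0,∞) be continuous, satisfying the no-arbitrage ODE d/dt (q_t P_t) = -q_t f(t). Then q_T P_T = q_0 P_0 · exp(-∫_0^T f(t)/P_t dt) for all T; consequently lim_{T→∞} q_T P_T = 0 if and only if ∫_0^∞ f(t)/P_t dt = ∞. -/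
/-!
Along the no-arbitrage ODE the deflated price `g = q P` is positive and solves
`g' = -g · (f / P)`, so `log g` has derivative `-f / P`. Integrating gives
`g T = g 0 · exp (-∫₀ᵀ f / P)`, and since `g 0 > 0` the deflated price vanishes at infinity
exactly when the exponent tends to `-∞`.
-/

open Filter Topology Set

theorem integral_eq_log_sub_log_of_hasDerivAt {g r : ℝ → ℝ} {a b : ℝ}
    (hg : ∀ t ∈ uIcc a b, 0 < g t) (hderiv : ∀ t ∈ uIcc a b, HasDerivAt g (-(g t * r t)) t)
    (hr : IntervalIntegrable r MeasureTheory.volume a b) :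
    ∫ t in a..b, r t = Real.log (g a) - Real.log (g b) := by
  have hlog : ∀ t ∈ uIcc a b, HasDerivAt (fun s => Real.log (g s)) (-r t) t := fun t ht => by
    convert (hderiv t ht).log (hg t ht).ne' using 1
    field_simp [(hg t ht).ne']
  have := intervalIntegral.integral_eq_sub_of_hasDerivAt hlog hr.neg
  rw [intervalIntegral.integral_neg] at this
  linarith

theorem eq_mul_exp_neg_integral_of_hasDerivAt {g r : ℝ → ℝ} {a b : ℝ}
    (hg : ∀ t ∈ uIcc a b, 0 < g t) (hderiv : ∀ t ∈ uIcc a b, HasDerivAt g (-(g t * r t)) t)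
    (hr : IntervalIntegrable r MeasureTheory.volume a b) :
    g b = g a * Real.exp (-∫ t in a..b, r t) := by
  have ha := hg a left_mem_uIcc
  have hb := hg b right_mem_uIcc
  rw [integral_eq_log_sub_log_of_hasDerivAt hg hderiv hr, neg_sub, Real.exp_sub,
    Real.exp_log hb, Real.exp_log ha, mul_div_cancel₀ _ ha.ne']

theorem tendsto_const_mul_exp_neg_nhds_zero_iff {α : Type*} {l : Filter α} {c : ℝ} (hc : 0 < c)
    {I : α → ℝ} :
    Tendsto (fun x => c * Real.exp (-I x)) l (𝓝 0) ↔ Tendsto I l atTop := by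
  have hexp : (fun x => c * Real.exp (-I x)) = fun x => Real.exp (-(I x + -Real.log c)) := by
    funext x
    rw [neg_add, neg_neg, Real.exp_add, Real.exp_log hc, mul_comm]
  rw [hexp, Real.tendsto_exp_comp_nhds_zero, tendsto_neg_atBot_iff]
  exact ⟨fun h => by simpa using tendsto_atTop_add_const_right l (Real.log c) h,
    tendsto_atTop_add_const_right l _⟩

theorem stmt_12_general (q P f : ℝ → ℝ)
    (hq : ∀ t, 0 < q t) (hP : ∀ t, 0 < P t)
    (hPc : Continuous P)
    (hf : Continuous f)
    (hna : ∀ t, HasDerivAt (fun s => q s * P s) (-(q t * f t)) t) :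
    (∀ T : ℝ, q T * P T =
      q 0 * P 0 * Real.exp (-(∫ t in (0:ℝ)..T, f t / P t))) ∧
    (Filter.Tendsto (fun T => q T * P T) Filter.atTop (nhds 0) ↔
      Filter.Tendsto (fun T => ∫ t in (0:ℝ)..T, f t / P t)
        Filter.atTop Filter.atTop) := by
  have hqP : ∀ t, 0 < q t * P t := fun t => mul_pos (hq t) (hP t)
  have hqP_deriv : ∀ t, HasDerivAt (fun s => q s * P s) (-(q t * P t * (f t / P t))) t := fun t => by
    convert hna t using 2
    field_simp [(hP t).ne']
  have hfP : Continuous fun t => f t / P t := hf.div hPc fun t => (hP t).ne'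
  have hformula : ∀ T, q T * P T = q 0 * P 0 * Real.exp (-(∫ t in (0:ℝ)..T, f t / P t)) :=
    fun T => eq_mul_exp_neg_integral_of_hasDerivAt (g := fun s => q s * P s)
      (fun t _ => hqP t) (fun t _ => hqP_deriv t) (hfP.intervalIntegrable 0 T)
  refine ⟨hformula, ?_⟩
  rw [funext hformula]
  exact tendsto_const_mul_exp_neg_nhds_zero_iff (hqP 0)

/-- Continuous-time Bubble Characterization:
q_T P_T = q_0 P_0 exp(-∫_0^T f/P), and lim q_T P_T = 0 iff ∫_0^∞ f/P = ∞. -/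
theorem stmt_12 (q P f : ℝ → ℝ)
    (hq : ∀ t, 0 < q t) (hq0 : q 0 = 1) (hP : ∀ t, 0 < P t)
    (hqc : Continuous q) (hPc : Continuous P)
    (hf : Continuous f) (hf0 : ∀ t, 0 ≤ f t)
    (hna : ∀ t, HasDerivAt (fun s => q s * P s) (-(q t * f t)) t) :
    (∀ T : ℝ, q T * P T =
      q 0 * P 0 * Real.exp (-(∫ t in (0:ℝ)..T, f t / P t))) ∧
    (Filter.Tendsto (fun T => q T * P T) Filter.atTop (nhds 0) ↔
      Filter.Tendsto (fun T => ∫ t in (0:ℝ)..T, f t / P t)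
        Filter.atTop Filter.atTop) :=
  stmt_12_general q P f hq hP hPc hf hna
end

section
/- In the continuous-time setting, if the asset price P_t and dividend rate D_t converge to positive constants P > 0 and D > 0, then ∫_0^∞ D_t/P_t dt = ∞, and hence under the no-arbitrage ODE d/dt(q_t P_t) = -q_t D_t with q_0 = 1, q_t > 0, P_t > 0, the transversality condition lim_{T→∞} q_T P_T = 0 holds (no rational bubble). -/
/-! Along the no-arbitrage ODE the discounted price `V = q P` solves the linear equation
`V' = -(D/P) V`, hence `V T = V 0 · exp (-∫₀ᵀ D/P)`. Since `D/P → D∞/P∞ > 0`, the dividend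
yield is eventually bounded below by a positive constant, so its integral diverges and the
exponential factor kills `V T`. -/

open Filter Topology MeasureTheory

theorem tendsto_intervalIntegral_atTop_of_eventually_ge {g : ℝ → ℝ} {a ε : ℝ} (hε : 0 < ε)
    (hg : ∀ b, IntervalIntegrable g volume a b) (hge : ∀ᶠ t in atTop, ε ≤ g t) :
    Tendsto (fun T => ∫ t in a..T, g t) atTop atTop := by
  obtain ⟨A, hA⟩ := hge.exists_forall_of_atTop
  have hlin : Tendsto (fun T => (∫ t in a..A, g t) + ε * (T - A)) atTop atTop :=
    tendsto_atTop_add_const_left _ _ <|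
      (tendsto_atTop_add_const_right _ _ tendsto_id).const_mul_atTop hε
  refine tendsto_atTop_mono' _ ?_ hlin
  filter_upwards [eventually_ge_atTop A] with T hT
  have hAT : IntervalIntegrable g volume A T := (hg A).symm.trans (hg T)
  calc (∫ t in a..A, g t) + ε * (T - A)
      = (∫ t in a..A, g t) + ∫ _ in A..T, ε := by
        rw [intervalIntegral.integral_const, smul_eq_mul, mul_comm]
    _ ≤ (∫ t in a..A, g t) + ∫ t in A..T, g t := by
        gcongr
        exact intervalIntegral.integral_mono_on hT intervalIntegrable_const hAT
          fun t ht => hA t ht.1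
    _ = ∫ t in a..T, g t := intervalIntegral.integral_add_adjacent_intervals (hg A) hAT

theorem eq_mul_exp_neg_intervalIntegral_of_hasDerivAt {V r : ℝ → ℝ} (hr : Continuous r)
    (hV : ∀ t, HasDerivAt V (-(r t * V t)) t) (a T : ℝ) :
    V T = V a * Real.exp (-∫ t in a..T, r t) := by
  set F : ℝ → ℝ := fun s => ∫ t in a..s, r t
  have hF : ∀ t, HasDerivAt F (r t) t := fun t =>
    intervalIntegral.integral_hasDerivAt_right (hr.intervalIntegrable a t)
      (hr.stronglyMeasurableAtFilter _ _) hr.continuousAt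
  have hG : ∀ t, HasDerivAt (fun s => V s * Real.exp (F s)) 0 t := fun t =>
    ((hV t).mul (hF t).exp).congr_deriv (by ring)
  have hconst : V T * Real.exp (F T) = V a * Real.exp (F a) :=
    is_const_of_deriv_eq_zero (fun t => (hG t).differentiableAt) (fun t => (hG t).deriv) T a
  simp only [F, intervalIntegral.integral_same, Real.exp_zero, mul_one] at hconst
  rw [Real.exp_neg, ← hconst, mul_inv_cancel_right₀ (Real.exp_ne_zero _)]

theorem stmt_13_general (q P D : ℝ → ℝ) (Pinf Dinf : ℝ) (hPinf : 0 < Pinf) (hDinf : 0 < Dinf)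
    (hP : ∀ t, 0 < P t)
    (hPc : Continuous P) (hDc : Continuous D)
    (hPlim : Filter.Tendsto P Filter.atTop (nhds Pinf))
    (hDlim : Filter.Tendsto D Filter.atTop (nhds Dinf))
    (hna : ∀ t, HasDerivAt (fun s => q s * P s) (-(q t * D t)) t) :
    Filter.Tendsto (fun T => ∫ t in (0:ℝ)..T, D t / P t)
      Filter.atTop Filter.atTop ∧
    Filter.Tendsto (fun T => q T * P T) Filter.atTop (nhds 0) := by
  have hyield : Continuous fun t => D t / P t := hDc.div hPc fun t => (hP t).ne'
  have hyield_lim : Tendsto (fun t => D t / P t) atTop (𝓝 (Dinf / Pinf)) :=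
    hDlim.div hPlim hPinf.ne'
  have hc : 0 < Dinf / Pinf := div_pos hDinf hPinf
  have hdiv : Tendsto (fun T => ∫ t in (0:ℝ)..T, D t / P t) atTop atTop :=
    tendsto_intervalIntegral_atTop_of_eventually_ge (half_pos hc)
      (fun b => hyield.intervalIntegrable 0 b)
      (hyield_lim.eventually (eventually_ge_nhds (half_lt_self hc)))
  have hode : ∀ t, HasDerivAt (fun s => q s * P s) (-(D t / P t * (q t * P t))) t := fun t => by
    convert hna t using 2
    field_simp [(hP t).ne']
  have hsol := eq_mul_exp_neg_intervalIntegral_of_hasDerivAt hyield hode 0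
  refine ⟨hdiv, ?_⟩
  have hdecay := (Real.tendsto_exp_atBot.comp (tendsto_neg_atBot_iff.mpr hdiv)).const_mul
    (q 0 * P 0)
  rw [mul_zero] at hdecay
  exact hdecay.congr fun T => (hsol T).symm

/-- If the price and dividend rate converge to positive constants, then
∫_0^∞ D_t/P_t dt = ∞ and the transversality condition holds. -/
theorem stmt_13 (q P D : ℝ → ℝ) (Pinf Dinf : ℝ) (hPinf : 0 < Pinf) (hDinf : 0 < Dinf)
    (hq : ∀ t, 0 < q t) (hq0 : q 0 = 1) (hP : ∀ t, 0 < P t) (hD : ∀ t, 0 ≤ D t)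
    (hqc : Continuous q) (hPc : Continuous P) (hDc : Continuous D)
    (hPlim : Filter.Tendsto P Filter.atTop (nhds Pinf))
    (hDlim : Filter.Tendsto D Filter.atTop (nhds Dinf))
    (hna : ∀ t, HasDerivAt (fun s => q s * P s) (-(q t * D t)) t) :
    Filter.Tendsto (fun T => ∫ t in (0:ℝ)..T, D t / P t)
      Filter.atTop Filter.atTop ∧
    Filter.Tendsto (fun T => q T * P T) Filter.atTop (nhds 0) :=
  stmt_13_general q P D Pinf Dinf hPinf hDinf hP hPc hDc hPlim hDlim hna
end

section
/- Suppose (P_t), (D_t), (q_t) satisfy the deterministic no-arbitrage equation q_t P_t = q_{t+1}(P_{t+1} + D_{t+1}) with q_t > 0, P_t > 0, q_0 = 1, and suppose there exists c > 0 and T_0 such that D_t/P_t ≥ c for all t ≥ T_0. Then q_T P_T ≤ q_{T_0} P_{T_0} (1+c)^{-(T-T_0)} for T ≥ T_0, so q_T P_T → 0 exponentially fast and there is no rational bubble. -/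
/-!
A dividend yield of at least `c` means that each period the discounted price loses at least the
fraction `c / (1 + c)` of its value to the dividend: `q_{t+1} P_{t+1} (1 + c) ≤ q_t P_t`.
Iterating gives the geometric bound, and `(1 + c)⁻¹ < 1` sends it to zero.
-/

open Filter Topology

theorem le_mul_inv_pow_of_mul_succ_le {K : Type*} [Field K] [LinearOrder K] [IsStrictOrderedRing K]
    {u : ℕ → K} {r : K} (hr : 0 < r) {T₀ : ℕ} (hstep : ∀ t, T₀ ≤ t → r * u (t + 1) ≤ u t)
    (k : ℕ) : u (T₀ + k) ≤ u T₀ * (r ^ k)⁻¹ := by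
  induction k with
  | zero => simp
  | succ k ih =>
    have hk := hstep (T₀ + k) (Nat.le_add_right _ _)
    calc u (T₀ + (k + 1)) ≤ u (T₀ + k) * r⁻¹ :=
          (le_mul_inv_iff₀ hr).mpr (by rwa [← add_assoc, mul_comm])
      _ ≤ u T₀ * (r ^ k)⁻¹ * r⁻¹ := by gcongr
      _ = u T₀ * (r ^ (k + 1))⁻¹ := by rw [pow_succ, mul_inv, mul_assoc]

theorem tendsto_zero_of_le_mul_inv_pow {u : ℕ → ℝ} {r C : ℝ} (hr : 1 < r) {T₀ : ℕ}
    (hu : ∀ T, 0 ≤ u T) (hbound : ∀ T, T₀ ≤ T → u T ≤ C * (r ^ (T - T₀))⁻¹) :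
    Tendsto u atTop (𝓝 0) := by
  have hgeom : Tendsto (fun T : ℕ => C * (r ^ (T - T₀))⁻¹) atTop (𝓝 0) := by
    have hpow : Tendsto (fun n : ℕ => r⁻¹ ^ n) atTop (𝓝 0) :=
      tendsto_pow_atTop_nhds_zero_of_lt_one (by positivity) (inv_lt_one_of_one_lt₀ hr)
    simpa [inv_pow] using ((hpow.comp (tendsto_sub_atTop_nat T₀)).const_mul C)
  exact squeeze_zero' (Eventually.of_forall hu)
    ((eventually_ge_atTop T₀).mono hbound) hgeom

theorem one_add_yield_mul_discounted_price_le {q P D : ℕ → ℝ} {c : ℝ} {t : ℕ}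
    (hq : 0 ≤ q (t + 1)) (hP : 0 < P (t + 1))
    (hna : q t * P t = q (t + 1) * (P (t + 1) + D (t + 1)))
    (hyield : c ≤ D (t + 1) / P (t + 1)) :
    (1 + c) * (q (t + 1) * P (t + 1)) ≤ q t * P t := by
  have hdiv : c * P (t + 1) ≤ D (t + 1) := (le_div_iff₀ hP).mp hyield
  calc (1 + c) * (q (t + 1) * P (t + 1)) = q (t + 1) * (P (t + 1) + c * P (t + 1)) := by ring
    _ ≤ q (t + 1) * (P (t + 1) + D (t + 1)) := by gcongr
    _ = q t * P t := hna.symm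

theorem stmt_18_general (q P D : ℕ → ℝ) (c : ℝ) (hc : 0 < c) (T₀ : ℕ)
    (hq : ∀ t, 0 < q t) (hP : ∀ t, 0 < P t)
    (hna : ∀ t, q t * P t = q (t + 1) * (P (t + 1) + D (t + 1)))
    (hyield : ∀ t, T₀ ≤ t → c ≤ D t / P t) :
    (∀ T, T₀ ≤ T → q T * P T ≤ q T₀ * P T₀ * ((1 + c) ^ (T - T₀))⁻¹) ∧
    Filter.Tendsto (fun T => q T * P T) Filter.atTop (nhds 0) := by
  have hstep : ∀ t, T₀ ≤ t → (1 + c) * (q (t + 1) * P (t + 1)) ≤ q t * P t := fun t ht =>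
    one_add_yield_mul_discounted_price_le (hq _).le (hP _) (hna t) (hyield _ (by omega))
  have hbound : ∀ T, T₀ ≤ T → q T * P T ≤ q T₀ * P T₀ * ((1 + c) ^ (T - T₀))⁻¹ := by
    intro T hT
    obtain ⟨k, rfl⟩ := Nat.exists_eq_add_of_le hT
    simpa using le_mul_inv_pow_of_mul_succ_le (u := fun t => q t * P t)
      (by linarith : (0 : ℝ) < 1 + c) hstep k
  exact ⟨hbound, tendsto_zero_of_le_mul_inv_pow (by linarith : (1 : ℝ) < 1 + c)
    (fun T => (mul_pos (hq T) (hP T)).le) hbound⟩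

/-- If the dividend yield is bounded below by c > 0 eventually, then
q_T P_T decays at least geometrically, so there is no rational bubble. -/
theorem stmt_18 (q P D : ℕ → ℝ) (c : ℝ) (hc : 0 < c) (T₀ : ℕ)
    (hq : ∀ t, 0 < q t) (hq0 : q 0 = 1) (hP : ∀ t, 0 < P t) (hD : ∀ t, 0 ≤ D t)
    (hna : ∀ t, q t * P t = q (t + 1) * (P (t + 1) + D (t + 1)))
    (hyield : ∀ t, T₀ ≤ t → c ≤ D t / P t) :
    (∀ T, T₀ ≤ T → q T * P T ≤ q T₀ * P T₀ * ((1 + c) ^ (T - T₀))⁻¹) ∧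
    Filter.Tendsto (fun T => q T * P T) Filter.atTop (nhds 0) :=
  stmt_18_general q P D c hc T₀ hq hP hna hyield
end
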